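/- For every ξ ∈ ℝⁿ with 0 < |ξ| < ε, the eigenvalue λ₋(ξ) satisfies −|ξ|^{2θ} ≤ λ₋(ξ) ≤ −(1/4)·(1 + 1/√2)·|ξ|^{2θ}. -/
import Mathlib


/-- The eigenvalue `λ₋(ξ)` in the real-eigenvalue (low frequency) regime. -/
noncomputable def lamMinus (n : ℕ) (δ α θ : ℝ) (ξ : EuclideanSpace ℝ (Fin n)) : ℝ :=
  ‖ξ‖ ^ (2 * θ) / (2 * (1 + ‖ξ‖ ^ (2 * δ))) *
    (-1 - Real.sqrt (1 - 4 * ‖ξ‖ ^ (2 * (α - 2 * θ)) * (1 + ‖ξ‖ ^ (2 * δ))))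

theorem stmt_2 (n : ℕ) (hn : 1 ≤ n) (δ α θ ε : ℝ)
    (hδ : 0 ≤ δ) (hα : 0 < α) (hθ : 0 ≤ θ) (hθα : 2 * θ < α)
    (hε : 0 < ε) (hεdef : ε ^ (α - 2 * θ) = 1 / 4) :
    ∀ ξ : EuclideanSpace ℝ (Fin n), 0 < ‖ξ‖ → ‖ξ‖ < ε →
      -‖ξ‖ ^ (2 * θ) ≤ lamMinus n δ α θ ξ ∧
        lamMinus n δ α θ ξ ≤ -(1 / 4) * (1 + 1 / Real.sqrt 2) * ‖ξ‖ ^ (2 * θ) := by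
  intro ξ hr0 hrε
  have hp : 0 < α - 2 * θ := by linarith
  have hε1 : ε < 1 := by
    by_contra h
    push_neg at h
    have h2 : (1 : ℝ) ^ (α - 2 * θ) ≤ ε ^ (α - 2 * θ) :=
      Real.rpow_le_rpow zero_le_one h hp.le
    rw [hεdef, Real.one_rpow] at h2
    linarith
  unfold lamMinus
  set r := ‖ξ‖ with hrdef
  have hr1 : r < 1 := hrε.trans hε1
  have ht : 0 < r ^ (2 * θ) := Real.rpow_pos_of_pos hr0 _
  have hd0 : 0 < r ^ (2 * δ) := Real.rpow_pos_of_pos hr0 _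
  have hd1 : r ^ (2 * δ) ≤ 1 := Real.rpow_le_one hr0.le hr1.le (by linarith)
  have hX0 : 0 < r ^ (2 * (α - 2 * θ)) := Real.rpow_pos_of_pos hr0 _
  have hX : r ^ (2 * (α - 2 * θ)) < 1 / 16 := by
    have h1 : r ^ (α - 2 * θ) < 1 / 4 := by
      calc r ^ (α - 2 * θ) < ε ^ (α - 2 * θ) := Real.rpow_lt_rpow hr0.le hrε hp
        _ = 1 / 4 := hεdef
    have h2 : r ^ (2 * (α - 2 * θ)) = r ^ (α - 2 * θ) * r ^ (α - 2 * θ) := by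
      rw [← Real.rpow_add hr0]; ring_nf
    have h3 : 0 < r ^ (α - 2 * θ) := Real.rpow_pos_of_pos hr0 _
    rw [h2]; nlinarith
  set t := r ^ (2 * θ) with htd
  set X := r ^ (2 * (α - 2 * θ)) with hXd
  set D := 1 + r ^ (2 * δ) with hDd
  have hD1 : 1 < D := by rw [hDd]; linarith
  have hD2 : D ≤ 2 := by rw [hDd]; linarith
  have harg : 1 / 2 ≤ 1 - 4 * X * D := by nlinarith
  have harg1 : 1 - 4 * X * D ≤ 1 := by nlinarith
  set s := Real.sqrt (1 - 4 * X * D) with hsd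
  have hs1 : s ≤ 1 := Real.sqrt_le_one.mpr harg1
  have hslb : 1 / Real.sqrt 2 ≤ s := by
    have h1 : Real.sqrt (1 / 2) ≤ s := Real.sqrt_le_sqrt harg
    have h2 : Real.sqrt (1 / 2) = 1 / Real.sqrt 2 := by
      rw [one_div, one_div, Real.sqrt_inv]
    linarith [h2 ▸ h1]
  have h2pos : (0 : ℝ) < Real.sqrt 2 := Real.sqrt_pos.mpr (by norm_num)
  have hvpos : (0 : ℝ) < 1 / Real.sqrt 2 := by positivity
  have hD0 : (0 : ℝ) < 2 * D := by linarith
  rw [div_mul_eq_mul_div]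
  constructor
  · rw [le_div_iff₀ hD0]
    nlinarith [mul_pos ht (sub_pos.mpr hD1)]
  · rw [div_le_iff₀ hD0]
    nlinarith [mul_nonneg ht.le (sub_nonneg.mpr hslb),
      mul_nonneg (mul_nonneg ht.le (by linarith : (0:ℝ) ≤ 2 - D)) hvpos.le]
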